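/- arXiv:2510.05645 — 4 statements merged into one kernel-verified Lean document; each statement's English description precedes it below -/
import Mathlib

section
/- In the setting of the previous statement, suppose additionally there exists ζ : ℝ^d × ℝ^d → [0,∞) satisfying: ζ(t,h) > 0 if t ≠ h; ζ(λt,λh) = λ^p ζ(t,h) for λ > 0; ζ(t+a,h+a) = ζ(t,h) for all a; and there exist δ > 0, c > 0 with ℓ(t,ϑ) ≥ c ζ(t,ϑ) for all t,ϑ ∈ B_δ(ϑ₀). Then ℓ₀(t,h) = 0 implies t = h; i.e., ℓ₀ is itself a loss function on ℝ^d × ℝ^d. -/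
open Real Set Filter Topology

theorem stmt4 {d : ℕ} (Θ : Set (EuclideanSpace ℝ (Fin d)))
    (ϑ₀ : EuclideanSpace ℝ (Fin d)) (hϑ₀ : ϑ₀ ∈ interior Θ)
    (p : ℝ) (hp : 0 < p)
    (ℓ ℓ₀ ζ : EuclideanSpace ℝ (Fin d) → EuclideanSpace ℝ (Fin d) → ℝ)
    (hnonneg : ∀ t ∈ Θ, ∀ ϑ ∈ Θ, 0 ≤ ℓ t ϑ)
    (hzero : ∀ t ∈ Θ, ∀ ϑ ∈ Θ, (ℓ t ϑ = 0 ↔ t = ϑ))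
    (hlim : ∀ t h : EuclideanSpace ℝ (Fin d),
      Tendsto (fun r : ℝ => ℓ (ϑ₀ + r • t) (ϑ₀ + r • h) / r ^ p)
        (𝓝[>] (0 : ℝ)) (𝓝 (ℓ₀ t h)))
    (hζnonneg : ∀ t h, 0 ≤ ζ t h)
    (hζpos : ∀ t h, t ≠ h → 0 < ζ t h)
    (hζhom : ∀ lam : ℝ, 0 < lam → ∀ t h, ζ (lam • t) (lam • h) = lam ^ p * ζ t h)
    (hζtrans : ∀ a t h, ζ (t + a) (h + a) = ζ t h)
    (hlower : ∃ δ > 0, ∃ c > 0, ∀ t ϑ : EuclideanSpace ℝ (Fin d),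
      ‖t - ϑ₀‖ ≤ δ → ‖ϑ - ϑ₀‖ ≤ δ → c * ζ t ϑ ≤ ℓ t ϑ) :
    ∀ t h : EuclideanSpace ℝ (Fin d), ℓ₀ t h = 0 → t = h := by
  intro t h h0
  by_contra hne
  obtain ⟨δ, hδ, c, hc, hlow⟩ := hlower
  have hζ := hζpos t h hne
  set M : ℝ := max ‖t‖ ‖h‖ + 1 with hM
  have hMpos : 0 < M := by positivity
  have hev : ∀ᶠ r in 𝓝[>] (0:ℝ),
      c * ζ t h ≤ ℓ (ϑ₀ + r • t) (ϑ₀ + r • h) / r ^ p := by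
    filter_upwards [Ioo_mem_nhdsGT_of_mem (by
        constructor
        · exact le_refl (0:ℝ)
        · positivity : (0:ℝ) ∈ Ico 0 (δ / M))] with r hr
    obtain ⟨hr0, hrδ⟩ := hr
    have hrp : (0:ℝ) < r ^ p := Real.rpow_pos_of_pos hr0 p
    have hbt : ‖(ϑ₀ + r • t) - ϑ₀‖ ≤ δ := by
      have : ‖(ϑ₀ + r • t) - ϑ₀‖ = r * ‖t‖ := by
        simp [norm_smul, abs_of_pos hr0]
      rw [this]
      have h1 : ‖t‖ ≤ M := le_trans (le_max_left _ _) (by linarith)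
      calc r * ‖t‖ ≤ r * M := by nlinarith [norm_nonneg t]
        _ ≤ δ := by
          rw [← le_div_iff₀ hMpos] at *
          linarith [hrδ.le]
    have hbh : ‖(ϑ₀ + r • h) - ϑ₀‖ ≤ δ := by
      have : ‖(ϑ₀ + r • h) - ϑ₀‖ = r * ‖h‖ := by
        simp [norm_smul, abs_of_pos hr0]
      rw [this]
      have h1 : ‖h‖ ≤ M := le_trans (le_max_right _ _) (by linarith)
      calc r * ‖h‖ ≤ r * M := by nlinarith [norm_nonneg h]
        _ ≤ δ := by
          rw [← le_div_iff₀ hMpos] at *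
          linarith [hrδ.le]
    have hζeq : ζ (ϑ₀ + r • t) (ϑ₀ + r • h) = r ^ p * ζ t h := by
      rw [add_comm ϑ₀ (r • t), add_comm ϑ₀ (r • h), hζtrans, hζhom r hr0]
    have hineq := hlow (ϑ₀ + r • t) (ϑ₀ + r • h) hbt hbh
    rw [hζeq] at hineq
    rw [le_div_iff₀ hrp]
    nlinarith
  have hle : c * ζ t h ≤ ℓ₀ t h := ge_of_tendsto (hlim t h) hev
  rw [h0] at hle
  nlinarith
end

section
/- For the Pareto family P_ϑ = Pareto(1, ϑ) with shape parameter ϑ > 2 (density ϑ x^{−ϑ−1} on (1,∞)), the squared 2-Wasserstein distance satisfies W₂²(P_t, P_ϑ) = 2(t−ϑ)² / ((tϑ − t − ϑ)(t−2)(ϑ−2)) for all t, ϑ > 2. -/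
open Real Set MeasureTheory

/-! The substitution `v = 1 - u` turns the Pareto quantiles into pure powers `v ^ (-1/t)`, and
`(v ^ a - v ^ b) ^ 2 = v ^ (2a) - 2 v ^ (a + b) + v ^ (2b)` integrates over `(0, 1)` term by term,
each term being finite exactly because `t, ϑ > 2` keeps the exponents above `-1`. -/

lemma setIntegral_Ioo_zero_one_comp_one_sub {E : Type*} [NormedAddCommGroup E] [NormedSpace ℝ E]
    (f : ℝ → E) : ∫ u in Ioo (0 : ℝ) 1, f (1 - u) = ∫ v in (0 : ℝ)..1, f v := by
  rw [← integral_Ioc_eq_integral_Ioo, ← intervalIntegral.integral_of_le zero_le_one,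
    intervalIntegral.integral_comp_sub_left, sub_zero, sub_self]

lemma integral_rpow_zero_one {r : ℝ} (hr : -1 < r) : ∫ v in (0 : ℝ)..1, v ^ r = 1 / (r + 1) := by
  rw [integral_rpow (Or.inl hr), one_rpow, zero_rpow (by linarith), sub_zero]

lemma integral_sq_rpow_sub_rpow {a b : ℝ} (ha : -1 / 2 < a) (hb : -1 / 2 < b) :
    ∫ v in (0 : ℝ)..1, (v ^ a - v ^ b) ^ 2
      = 1 / (2 * a + 1) - 2 / (a + b + 1) + 1 / (2 * b + 1) := by
  have hexpand : ∫ v in (0 : ℝ)..1, (v ^ a - v ^ b) ^ 2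
      = ∫ v in (0 : ℝ)..1, (v ^ (2 * a) - 2 * v ^ (a + b) + v ^ (2 * b)) := by
    refine intervalIntegral.integral_congr_ae (ae_of_all _ fun v hv => ?_)
    have hv0 : 0 < v := by simpa using hv.1
    simp only [two_mul, rpow_add hv0]
    ring
  have haa : -1 < 2 * a := by linarith
  have hab : -1 < a + b := by linarith
  have hbb : -1 < 2 * b := by linarith
  have iaa := intervalIntegral.intervalIntegrable_rpow' (a := 0) (b := 1) haa
  have iab := (intervalIntegral.intervalIntegrable_rpow' (a := 0) (b := 1) hab).const_mul 2
  have ibb := intervalIntegral.intervalIntegrable_rpow' (a := 0) (b := 1) hbb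
  rw [hexpand, intervalIntegral.integral_add (iaa.sub iab) ibb,
    intervalIntegral.integral_sub iaa iab, intervalIntegral.integral_const_mul,
    integral_rpow_zero_one haa, integral_rpow_zero_one hab, integral_rpow_zero_one hbb]
  ring

lemma one_div_sub_two_div_add_one_div_of_neg_inv {t ϑ : ℝ} (ht : t ≠ 0) (hϑ : ϑ ≠ 0)
    (ht2 : t - 2 ≠ 0) (hϑ2 : ϑ - 2 ≠ 0) (htϑ : t * ϑ - t - ϑ ≠ 0) :
    1 / (2 * -(1 / t) + 1) - 2 / (-(1 / t) + -(1 / ϑ) + 1) + 1 / (2 * -(1 / ϑ) + 1)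
      = 2 * (t - ϑ) ^ 2 / ((t * ϑ - t - ϑ) * (t - 2) * (ϑ - 2)) := by
  have htt : 2 * -(1 / t) + 1 = (t - 2) / t := by field_simp; ring
  have hϑϑ : 2 * -(1 / ϑ) + 1 = (ϑ - 2) / ϑ := by field_simp; ring
  have htϑ' : -(1 / t) + -(1 / ϑ) + 1 = (t * ϑ - t - ϑ) / (t * ϑ) := by field_simp; ring
  rw [htt, hϑϑ, htϑ']
  -- `field_simp` cannot see that its normal form of `t * ϑ - t - ϑ` is nonzero
  generalize hs : t * ϑ - t - ϑ = s at htϑ ⊢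
  field_simp
  subst hs
  ring

theorem stmt7 (t ϑ : ℝ) (ht : 2 < t) (hϑ : 2 < ϑ) :
    (∫ u in Set.Ioo (0 : ℝ) 1, ((1 - u) ^ (-(1 / t)) - (1 - u) ^ (-(1 / ϑ))) ^ 2)
      = 2 * (t - ϑ) ^ 2 / ((t * ϑ - t - ϑ) * (t - 2) * (ϑ - 2)) := by
  have hinv {s : ℝ} (hs : 2 < s) : -1 / 2 < -(1 / s) := by
    rw [neg_div, neg_lt_neg_iff]
    exact one_div_lt_one_div_of_lt two_pos hs
  rw [setIntegral_Ioo_zero_one_comp_one_sub (fun v => (v ^ (-(1 / t)) - v ^ (-(1 / ϑ))) ^ 2),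
    integral_sq_rpow_sub_rpow (hinv ht) (hinv hϑ)]
  exact one_div_sub_two_div_add_one_div_of_neg_inv (by linarith) (by linarith) (by linarith)
    (by linarith) (by nlinarith)
end

section
/- For Pareto distributions P_t = Pareto(1,t), t > 2, define ℓ(t,ϑ) = W₂²(P_t,P_ϑ) = 2(t−ϑ)²/((tϑ−t−ϑ)(t−2)(ϑ−2)). Then ∂ℓ/∂t (t,ϑ) = 2(t−ϑ)((2ϑ−1)t − 3ϑ) / ((t−2)²((ϑ−1)t − ϑ)²), which is positive for t > ϑ, negative for t < ϑ, and zero at t = ϑ (for all t, ϑ > 2). In particular, t ↦ ℓ(t,ϑ) is strictly decreasing on (2,ϑ) and strictly increasing on (ϑ,∞). -/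
/-!
The map `t ↦ ℓ(t, ϑ)` is a quotient of polynomials, so its derivative comes from the quotient
rule; after clearing denominators (using `tϑ - t - ϑ = (ϑ - 1)t - ϑ`) it is
`2(t - ϑ)((2ϑ - 1)t - 3ϑ) / ((t - 2)²((ϑ - 1)t - ϑ)²)`. For `t, ϑ > 2` the factor
`(2ϑ - 1)t - 3ϑ > ϑ - 2` is positive and the denominator is a nonzero square, so the derivative has
the sign of `t - ϑ`, and monotonicity on each side of `ϑ` follows from the mean value theorem.
-/

open Real Set

/-- `ℓ(t, ϑ)` of the paper, with `ϑ` first so that `paretoW2Sq ϑ` is the map `t ↦ ℓ(t, ϑ)`. -/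
noncomputable def paretoW2Sq (ϑ t : ℝ) : ℝ :=
  2 * (t - ϑ) ^ 2 / ((t * ϑ - t - ϑ) * (t - 2) * (ϑ - 2))

noncomputable def paretoW2SqDeriv (ϑ t : ℝ) : ℝ :=
  2 * (t - ϑ) * ((2 * ϑ - 1) * t - 3 * ϑ) / ((t - 2) ^ 2 * ((ϑ - 1) * t - ϑ) ^ 2)

section

variable {ϑ t : ℝ}

theorem hasDerivAt_paretoW2Sq (hϑ : ϑ ≠ 2) (ht : t ≠ 2) (hq : (ϑ - 1) * t - ϑ ≠ 0) :
    HasDerivAt (paretoW2Sq ϑ) (paretoW2SqDeriv ϑ t) t := by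
  have hnum : HasDerivAt (fun s : ℝ => 2 * (s - ϑ) ^ 2) (2 * (2 * (t - ϑ))) t := by
    simpa using (((hasDerivAt_id t).sub_const ϑ).pow 2).const_mul 2
  have hfac : HasDerivAt (fun s : ℝ => s * ϑ - s - ϑ) (ϑ - 1) t := by
    simpa [mul_comm] using
      ((((hasDerivAt_id t).mul_const ϑ).sub (hasDerivAt_id t)).sub_const ϑ)
  have hden : HasDerivAt (fun s : ℝ => (s * ϑ - s - ϑ) * (s - 2) * (ϑ - 2))
      (((ϑ - 1) * (t - 2) + (t * ϑ - t - ϑ) * 1) * (ϑ - 2)) t :=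
    (hfac.mul ((hasDerivAt_id t).sub_const 2)).mul_const (ϑ - 2)
  have hq_ne : t * ϑ - t - ϑ ≠ 0 := by contrapose! hq; linarith
  have hden_ne : (t * ϑ - t - ϑ) * (t - 2) * (ϑ - 2) ≠ 0 := by
    simp [hq_ne, sub_eq_zero, ht, hϑ]
  refine (hnum.div hden hden_ne).congr_deriv ?_
  have ht' : t - 2 ≠ 0 := sub_ne_zero.mpr ht
  have hϑ' : ϑ - 2 ≠ 0 := sub_ne_zero.mpr hϑ
  unfold paretoW2SqDeriv
  field_simp
  ring

theorem sub_one_mul_sub_pos_of_two_lt (hϑ : 2 < ϑ) (ht : 2 < t) : 0 < (ϑ - 1) * t - ϑ := by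
  nlinarith

theorem mul_sub_three_mul_pos_of_two_lt (hϑ : 2 < ϑ) (ht : 2 < t) :
    0 < (2 * ϑ - 1) * t - 3 * ϑ := by
  nlinarith

theorem paretoW2SqDeriv_denom_pos (hϑ : 2 < ϑ) (ht : 2 < t) :
    0 < (t - 2) ^ 2 * ((ϑ - 1) * t - ϑ) ^ 2 := by
  have := sub_one_mul_sub_pos_of_two_lt hϑ ht
  have : 0 < t - 2 := by linarith
  positivity

theorem paretoW2SqDeriv_pos (hϑ : 2 < ϑ) (ht : 2 < t) (hlt : ϑ < t) :
    0 < paretoW2SqDeriv ϑ t := by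
  have := mul_sub_three_mul_pos_of_two_lt hϑ ht
  have : 0 < t - ϑ := by linarith
  exact div_pos (by positivity) (paretoW2SqDeriv_denom_pos hϑ ht)

theorem paretoW2SqDeriv_neg (hϑ : 2 < ϑ) (ht : 2 < t) (hlt : t < ϑ) :
    paretoW2SqDeriv ϑ t < 0 := by
  have := mul_sub_three_mul_pos_of_two_lt hϑ ht
  have : t - ϑ < 0 := by linarith
  refine div_neg_of_neg_of_pos ?_ (paretoW2SqDeriv_denom_pos hϑ ht)
  nlinarith

theorem hasDerivAt_paretoW2Sq_of_two_lt (hϑ : 2 < ϑ) (ht : 2 < t) :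
    HasDerivAt (paretoW2Sq ϑ) (paretoW2SqDeriv ϑ t) t :=
  hasDerivAt_paretoW2Sq hϑ.ne' ht.ne' (sub_one_mul_sub_pos_of_two_lt hϑ ht).ne'

theorem strictAntiOn_paretoW2Sq (hϑ : 2 < ϑ) : StrictAntiOn (paretoW2Sq ϑ) (Ioo 2 ϑ) := by
  have hderiv (x : ℝ) (hx : x ∈ Ioo 2 ϑ) :=
    hasDerivAt_paretoW2Sq_of_two_lt hϑ hx.1
  refine strictAntiOn_of_hasDerivWithinAt_neg (f' := paretoW2SqDeriv ϑ) (convex_Ioo 2 ϑ)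
    (fun x hx => (hderiv x hx).continuousAt.continuousWithinAt) ?_ ?_ <;>
    rw [interior_Ioo] <;> intro x hx
  · exact (hderiv x hx).hasDerivWithinAt
  · exact paretoW2SqDeriv_neg hϑ hx.1 hx.2

theorem strictMonoOn_paretoW2Sq (hϑ : 2 < ϑ) : StrictMonoOn (paretoW2Sq ϑ) (Ioi ϑ) := by
  have hderiv (x : ℝ) (hx : x ∈ Ioi ϑ) :=
    hasDerivAt_paretoW2Sq_of_two_lt hϑ (hϑ.trans hx)
  refine strictMonoOn_of_hasDerivWithinAt_pos (f' := paretoW2SqDeriv ϑ) (convex_Ioi ϑ)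
    (fun x hx => (hderiv x hx).continuousAt.continuousWithinAt) ?_ ?_ <;>
    rw [interior_Ioi] <;> intro x hx
  · exact (hderiv x hx).hasDerivWithinAt
  · exact paretoW2SqDeriv_pos hϑ (hϑ.trans hx) hx

end

theorem stmt8 (ϑ : ℝ) (hϑ : 2 < ϑ) :
    (∀ t : ℝ, 2 < t →
      HasDerivAt (fun s : ℝ => 2 * (s - ϑ) ^ 2 / ((s * ϑ - s - ϑ) * (s - 2) * (ϑ - 2)))
        (2 * (t - ϑ) * ((2 * ϑ - 1) * t - 3 * ϑ) / ((t - 2) ^ 2 * ((ϑ - 1) * t - ϑ) ^ 2)) t) ∧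
    (∀ t : ℝ, 2 < t → ϑ < t →
      0 < 2 * (t - ϑ) * ((2 * ϑ - 1) * t - 3 * ϑ) / ((t - 2) ^ 2 * ((ϑ - 1) * t - ϑ) ^ 2)) ∧
    (∀ t : ℝ, 2 < t → t < ϑ →
      2 * (t - ϑ) * ((2 * ϑ - 1) * t - 3 * ϑ) / ((t - 2) ^ 2 * ((ϑ - 1) * t - ϑ) ^ 2) < 0) ∧
    (2 * (ϑ - ϑ) * ((2 * ϑ - 1) * ϑ - 3 * ϑ) / ((ϑ - 2) ^ 2 * ((ϑ - 1) * ϑ - ϑ) ^ 2) = 0) ∧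
    StrictAntiOn (fun s : ℝ => 2 * (s - ϑ) ^ 2 / ((s * ϑ - s - ϑ) * (s - 2) * (ϑ - 2)))
      (Set.Ioo 2 ϑ) ∧
    StrictMonoOn (fun s : ℝ => 2 * (s - ϑ) ^ 2 / ((s * ϑ - s - ϑ) * (s - 2) * (ϑ - 2)))
      (Set.Ioi ϑ) :=
  ⟨fun _ ht => hasDerivAt_paretoW2Sq_of_two_lt hϑ ht,
    fun _ ht hlt => paretoW2SqDeriv_pos hϑ ht hlt,
    fun _ ht hlt => paretoW2SqDeriv_neg hϑ ht hlt,
    by simp,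
    strictAntiOn_paretoW2Sq hϑ,
    strictMonoOn_paretoW2Sq hϑ⟩
end

section
/- Consider Gompertz distributions P_ϑ, ϑ > 0, with density p_ϑ(x) = ϑ exp(ϑ + x − ϑe^x) on (0,∞) and cdf F_ϑ(x) = 1 − exp(−ϑ(e^x − 1)). For t, ϑ > 0, the 1-Wasserstein distance satisfies W₁(P_t, P_ϑ) = ∫₀^∞ |e^{−t(e^x−1)} − e^{−ϑ(e^x−1)}| dx = sign(t−ϑ) · (E₁(ϑ)e^ϑ − E₁(t)e^t), where E₁(s) = ∫_s^∞ u^{−1} e^{−u} du is the exponential integral. -/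
open Real Set MeasureTheory

set_option maxHeartbeats 1000000

lemma key_integrable {s : ℝ} (hs : 0 < s) :
    IntegrableOn (fun x => Real.exp (-s * (Real.exp x - 1))) (Set.Ioi 0) := by
  have h := exp_neg_integrableOn_Ioi (0 : ℝ) hs
  refine h.mono' ?_ ?_
  · apply Continuous.aestronglyMeasurable
    fun_prop
  · filter_upwards [ae_restrict_mem measurableSet_Ioi] with x hx
    rw [Real.norm_eq_abs, abs_of_pos (Real.exp_pos _)]
    apply Real.exp_le_exp.mpr
    have : x ≤ Real.exp x - 1 := by linarith [Real.add_one_le_exp x]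
    nlinarith

lemma key_eq {s : ℝ} (hs : 0 < s) :
    (∫ x in Set.Ioi (0 : ℝ), Real.exp (-s * (Real.exp x - 1)))
      = (∫ u in Set.Ioi s, Real.exp (-u) / u) * Real.exp s := by
  have himg : (fun x => s * Real.exp x) '' Set.Ioi (0 : ℝ) = Set.Ioi s := by
    ext u
    constructor
    · rintro ⟨x, hx, rfl⟩
      have h1 : (1 : ℝ) < Real.exp x := by
        simpa using Real.exp_lt_exp.mpr (show (0:ℝ) < x from hx)
      simpa using (by nlinarith : s < s * Real.exp x)
    · intro hu
      have hu' : 0 < u := lt_trans hs hu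
      refine ⟨Real.log (u / s), ?_, ?_⟩
      · apply Real.log_pos
        rw [lt_div_iff₀ hs]; simpa using hu
      · show s * Real.exp (Real.log (u / s)) = u
        rw [Real.exp_log (by positivity)]
        field_simp
  have hsub := integral_image_eq_integral_abs_deriv_smul (s := Set.Ioi (0:ℝ)) (f := fun x => s * Real.exp x)
      (f' := fun x => s * Real.exp x) measurableSet_Ioi
      (fun x _ => ((Real.hasDerivAt_exp x).const_mul s).hasDerivWithinAt)
      (fun a _ b _ h => by
        have := mul_left_cancel₀ (ne_of_gt hs) h
        exact Real.exp_injective this)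
      (fun u => Real.exp (-u) / u)
  rw [himg] at hsub
  rw [hsub, ← integral_mul_const]
  apply setIntegral_congr_fun measurableSet_Ioi
  intro x hx
  have hex : (0:ℝ) < Real.exp x := Real.exp_pos x
  have habs : |s * Real.exp x| = s * Real.exp x := abs_of_pos (by positivity)
  simp only [smul_eq_mul, habs]
  rw [mul_div_assoc', mul_div_cancel_left₀ _ (by positivity : s * Real.exp x ≠ 0),
    ← Real.exp_add]
  ring_nf

lemma main_half {t ϑ : ℝ} (ht : 0 < t) (hϑ : 0 < ϑ) (h : ϑ < t) :
    (∫ x in Set.Ioi (0 : ℝ),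
        |Real.exp (-t * (Real.exp x - 1)) - Real.exp (-ϑ * (Real.exp x - 1))|)
      = (∫ u in Set.Ioi ϑ, Real.exp (-u) / u) * Real.exp ϑ -
            (∫ u in Set.Ioi t, Real.exp (-u) / u) * Real.exp t := by
  rw [← key_eq hϑ, ← key_eq ht,
    ← integral_sub (key_integrable hϑ) (key_integrable ht)]
  apply setIntegral_congr_fun measurableSet_Ioi
  intro x hx
  dsimp only
  have h1 : (0:ℝ) ≤ Real.exp x - 1 := by
    have := Real.one_le_exp (le_of_lt (show (0:ℝ) < x from hx)); linarith
  have h2 : Real.exp (-t * (Real.exp x - 1)) ≤ Real.exp (-ϑ * (Real.exp x - 1)) := by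
    apply Real.exp_le_exp.mpr; nlinarith
  rw [abs_of_nonpos (by linarith)]
  ring

theorem stmt14 (t ϑ : ℝ) (ht : 0 < t) (hϑ : 0 < ϑ) :
    (∫ x in Set.Ioi (0 : ℝ),
        |Real.exp (-t * (Real.exp x - 1)) - Real.exp (-ϑ * (Real.exp x - 1))|)
      = Real.sign (t - ϑ) *
          ((∫ u in Set.Ioi ϑ, Real.exp (-u) / u) * Real.exp ϑ -
            (∫ u in Set.Ioi t, Real.exp (-u) / u) * Real.exp t) := by
  rcases lt_trichotomy t ϑ with hlt | heq | hgt
  · rw [Real.sign_of_neg (by linarith)]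
    have h2 : (∫ x in Set.Ioi (0 : ℝ),
        |Real.exp (-t * (Real.exp x - 1)) - Real.exp (-ϑ * (Real.exp x - 1))|)
      = (∫ x in Set.Ioi (0 : ℝ),
        |Real.exp (-ϑ * (Real.exp x - 1)) - Real.exp (-t * (Real.exp x - 1))|) := by
      congr 1; ext x; rw [abs_sub_comm]
    rw [h2, main_half hϑ ht hlt]
    ring
  · subst heq
    simp
  · rw [Real.sign_of_pos (by linarith), one_mul]
    exact main_half ht hϑ hgt
end
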